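/- Let d ≥ 1, let x_1, …, x_N ∈ [0,1]^d, let ε > 0, and define f_ε : ℝ^d → ℝ by f_ε(x) = min{ε, min_{1 ≤ k ≤ N} ‖x − x_k‖}. Then: (i) f_ε is Lipschitz with constant 1; (ii) f_ε(x_j) = 0 for every j, so (1/N)∑_{k=1}^N f_ε(x_k) = 0; and (iii) ∫_{[0,1]^d} f_ε(x) dx ≥ ε · (1 − N · ω_d · ε^d), where ω_d is the Lebesgue measure of the unit ball in ℝ^d. Consequently the integration error satisfies |∫_{[0,1]^d} f_ε dx − (1/N)∑_k f_ε(x_k)| ≥ ε(1 − N ω_d ε^d). -/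

import Mathlib

open MeasureTheory Metric
open scoped ENNReal

noncomputable section

/-- The closed unit cube `[0,1]^d` in `ℝ^d`. -/
def unitCube (d : ℕ) : Set (EuclideanSpace ℝ (Fin d)) :=
  {x | ∀ i, x i ∈ Set.Icc (0 : ℝ) 1}

/-- `ω_d`, the Lebesgue volume of the closed unit ball in `ℝ^d`. -/
def unitBallVol (d : ℕ) : ℝ :=
  (volume (Metric.closedBall (0 : EuclideanSpace ℝ (Fin d)) 1)).toReal

/-! The function `min ε (⨅ k, ‖y - x k‖)` is the distance from `y` to the nodes `x k`,
truncated at `ε`, so it is `1`-Lipschitz, vanishes at the nodes and equals `ε` outside the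
`ε`-balls around them. Those balls cover volume at most `N ω_d ε^d`, so the integral over
the unit cube is at least `ε (1 - N ω_d ε^d)`, while the quadrature sum is `0`. -/

section TruncatedDistance

variable {E ι : Type*} [SeminormedAddCommGroup E]

theorem iInf_norm_sub_eq_infDist_range (x : ι → E) (y : E) :
    ⨅ k, ‖y - x k‖ = infDist y (Set.range x) := by
  rw [infDist_eq_iInf, iInf_range' (fun z => dist y z) x]
  simp only [dist_eq_norm]

theorem lipschitzWith_min_iInf_norm_sub (x : ι → E) (ε : ℝ) :
    LipschitzWith 1 fun y => min ε (⨅ k, ‖y - x k‖) := by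
  simp only [iInf_norm_sub_eq_infDist_range]
  exact lipschitz_infDist_pt _ |>.const_min ε

theorem min_iInf_norm_sub_mem_Icc (x : ι → E) {ε : ℝ} (hε : 0 ≤ ε) (y : E) :
    min ε (⨅ k, ‖y - x k‖) ∈ Set.Icc 0 ε := by
  rw [iInf_norm_sub_eq_infDist_range]
  exact ⟨le_min hε infDist_nonneg, min_le_left _ _⟩

theorem min_iInf_norm_sub_self (x : ι → E) {ε : ℝ} (hε : 0 ≤ ε) (j : ι) :
    min ε (⨅ k, ‖x j - x k‖) = 0 := by
  rw [iInf_norm_sub_eq_infDist_range, infDist_zero_of_mem (Set.mem_range_self j)]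
  exact min_eq_right hε

theorem min_iInf_norm_sub_of_notMem_iUnion_closedBall [Nonempty ι] (x : ι → E) {ε : ℝ}
    {y : E} (hy : y ∉ ⋃ k, closedBall (x k) ε) :
    min ε (⨅ k, ‖y - x k‖) = ε := by
  refine min_eq_left (le_ciInf fun k => ?_)
  have hk : y ∉ closedBall (x k) ε := fun h => hy (Set.mem_iUnion.2 ⟨k, h⟩)
  rw [mem_closedBall, not_le, dist_eq_norm] at hk
  exact hk.le

end TruncatedDistance

theorem addHaar_real_iUnion_closedBall_le {E ι : Type*} [NormedAddCommGroup E]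
    [NormedSpace ℝ E] [MeasurableSpace E] [BorelSpace E] [FiniteDimensional ℝ E]
    (μ : Measure E) [μ.IsAddHaarMeasure] [Fintype ι] (x : ι → E) {r : ℝ} (hr : 0 ≤ r) :
    μ.real (⋃ k, closedBall (x k) r) ≤
      Fintype.card ι * μ.real (closedBall 0 1) * r ^ Module.finrank ℝ E := by
  refine (measureReal_iUnion_fintype_le _).trans_eq ?_
  simp only [Measure.addHaar_real_closedBall' μ _ hr, Finset.sum_const, Finset.card_univ,
    nsmul_eq_mul]
  ring

theorem mul_sub_measureReal_le_setIntegral {X : Type*} [MeasurableSpace X] {μ : Measure X}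
    {f : X → ℝ} {s t : Set X} {c : ℝ} (hc : 0 ≤ c) (hs : MeasurableSet s)
    (ht : MeasurableSet t) (ht_fin : μ t ≠ ∞) (hf : IntegrableOn f s μ) (hf_nonneg : 0 ≤ f)
    (hf_eq : ∀ y ∈ s \ t, f y = c) :
    c * (μ.real s - μ.real t) ≤ ∫ y in s, f y ∂μ :=
  calc c * (μ.real s - μ.real t) ≤ c * μ.real (s \ t) := by
        gcongr; exact le_measureReal_sdiff ht_fin
    _ = ∫ y in s \ t, f y ∂μ := by
      rw [setIntegral_congr_fun (hs.diff ht) hf_eq, setIntegral_const, smul_eq_mul, mul_comm]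
    _ ≤ ∫ y in s, f y ∂μ :=
      setIntegral_mono_set hf (.of_forall hf_nonneg) Set.sdiff_subset.eventuallyLE

theorem unitCube_eq_preimage_ofLp (d : ℕ) :
    unitCube d = WithLp.ofLp ⁻¹' Set.univ.pi fun _ => Set.Icc (0 : ℝ) 1 := by
  ext y
  simp only [unitCube, Set.mem_ofPred_eq, Set.mem_preimage, Set.mem_univ_pi]

theorem measurableSet_unitCube (d : ℕ) : MeasurableSet (unitCube d) := by
  rw [unitCube_eq_preimage_ofLp]
  exact (MeasurableSet.univ_pi fun _ => measurableSet_Icc).preimage (WithLp.measurable_ofLp 2 _)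

theorem volume_unitCube (d : ℕ) : volume (unitCube d) = 1 := by
  rw [unitCube_eq_preimage_ofLp, (PiLp.volume_preserving_ofLp (Fin d)).measure_preimage
    (MeasurableSet.univ_pi fun _ => measurableSet_Icc).nullMeasurableSet, volume_pi_pi]
  simp [Real.volume_Icc]

theorem mul_one_sub_le_setIntegral_unitCube_min_iInf_norm_sub {d : ℕ} {ι : Type*} [Fintype ι]
    [Nonempty ι] (x : ι → EuclideanSpace ℝ (Fin d)) {ε : ℝ} (hε : 0 ≤ ε) :
    ε * (1 - Fintype.card ι * unitBallVol d * ε ^ d) ≤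
      ∫ y in unitCube d, min ε (⨅ k, ‖y - x k‖) := by
  have hrange := min_iInf_norm_sub_mem_Icc x hε
  have hballs :
      volume.real (⋃ k, closedBall (x k) ε) ≤ Fintype.card ι * unitBallVol d * ε ^ d := by
    simpa [unitBallVol, measureReal_def] using addHaar_real_iUnion_closedBall_le volume x hε
  have hint : IntegrableOn (fun y => min ε (⨅ k, ‖y - x k‖)) (unitCube d) :=
    Measure.integrableOn_of_bounded (by simp [volume_unitCube])
      (lipschitzWith_min_iInf_norm_sub x ε).continuous.aestronglyMeasurable (M := ε) <|
        .of_forall fun y => by rw [Real.norm_of_nonneg (hrange y).1]; exact (hrange y).2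
  calc ε * (1 - Fintype.card ι * unitBallVol d * ε ^ d)
      ≤ ε * (volume.real (unitCube d) - volume.real (⋃ k, closedBall (x k) ε)) := by
        rw [measureReal_def, volume_unitCube, ENNReal.toReal_one]; gcongr
    _ ≤ _ := mul_sub_measureReal_le_setIntegral hε (measurableSet_unitCube d)
        (.iUnion fun k => measurableSet_closedBall)
        (isCompact_iUnion fun k => isCompact_closedBall _ _).measure_lt_top.ne hint
        (fun y => (hrange y).1)
        (fun y hy => min_iInf_norm_sub_of_notMem_iUnion_closedBall x hy.2)

theorem stmt7_general (d : ℕ) (N : ℕ) (hN : 0 < N)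
    (x : Fin N → EuclideanSpace ℝ (Fin d))
    (ε : ℝ) (hε : 0 < ε)
    (fε : EuclideanSpace ℝ (Fin d) → ℝ)
    (hfε : ∀ y, fε y = min ε (⨅ k, ‖y - x k‖)) :
    LipschitzWith 1 fε ∧
    ((∀ j, fε (x j) = 0) ∧ (1 / N : ℝ) * ∑ k, fε (x k) = 0) ∧
    ε * (1 - N * unitBallVol d * ε ^ d) ≤ ∫ y in unitCube d, fε y ∧
    ε * (1 - N * unitBallVol d * ε ^ d) ≤
      |(∫ y in unitCube d, fε y) - (1 / N : ℝ) * ∑ k, fε (x k)| := by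
  have : Nonempty (Fin N) := Fin.pos_iff_nonempty.1 hN
  obtain rfl : fε = fun y => min ε (⨅ k, ‖y - x k‖) := funext hfε
  beta_reduce
  have hzero : ∀ j, min ε (⨅ k, ‖x j - x k‖) = 0 := min_iInf_norm_sub_self x hε.le
  have hmean : (1 / N : ℝ) * ∑ k, min ε (⨅ i, ‖x k - x i‖) = 0 := by simp [hzero]
  have hlower := mul_one_sub_le_setIntegral_unitCube_min_iInf_norm_sub x hε.le
  rw [Fintype.card_fin] at hlower
  refine ⟨lipschitzWith_min_iInf_norm_sub x ε, ⟨hzero, hmean⟩, hlower, ?_⟩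
  rw [hmean, sub_zero]
  exact hlower.trans (le_abs_self _)

theorem stmt7 (d : ℕ) (hd : 1 ≤ d) (N : ℕ) (hN : 0 < N)
    (x : Fin N → EuclideanSpace ℝ (Fin d)) (hx : ∀ k, x k ∈ unitCube d)
    (ε : ℝ) (hε : 0 < ε)
    (fε : EuclideanSpace ℝ (Fin d) → ℝ)
    (hfε : ∀ y, fε y = min ε (⨅ k, ‖y - x k‖)) :
    LipschitzWith 1 fε ∧
    ((∀ j, fε (x j) = 0) ∧ (1 / N : ℝ) * ∑ k, fε (x k) = 0) ∧
    ε * (1 - N * unitBallVol d * ε ^ d) ≤ ∫ y in unitCube d, fε y ∧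
    ε * (1 - N * unitBallVol d * ε ^ d) ≤
      |(∫ y in unitCube d, fε y) - (1 / N : ℝ) * ∑ k, fε (x k)| :=
  stmt7_general d N hN x ε hε fε hfε
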